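/- Let Δ ⊆ ℝ⁴ be a reflexive polytope and let v₁, v₂, v₃ ∈ Δ ∩ ℤ⁴ be ℝ-linearly independent points with Cone(v₁,v₂,v₃) ∩ Δ ∩ ℤ⁴ = {0, v₁, v₂, v₃}, and suppose v₁, v₂, v₃ do not lie in a common proper face of Δ. Fix distinct indices i, j, k with {i, j, k} = {1, 2, 3}. Then there is at most one lattice point m ∈ Δ* ∩ ℤ⁴ such that ⟨m, vᵢ⟩ = ⟨m, vⱼ⟩ = −1 and ⟨m, v_k⟩ = 0. -/

import Mathlib

open Pointwise

/-- The standard pairing `⟨m,n⟩ = ∑ i, mᵢ nᵢ` on `ℝ^d`. -/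
def pairing {d : ℕ} (m n : Fin d → ℝ) : ℝ := ∑ i, m i * n i

/-- A point of `ℝ^d` is a lattice point if all coordinates are integers. -/
def IsLatticePt {d : ℕ} (v : Fin d → ℝ) : Prop := ∀ i, ∃ n : ℤ, v i = (n : ℝ)

/-- The set of lattice points of `ℝ^d`. -/
def latticePts (d : ℕ) : Set (Fin d → ℝ) := {v | IsLatticePt v}

/-- A lattice polytope is the convex hull of finitely many lattice points. -/
def IsLatticePolytope {d : ℕ} (Δ : Set (Fin d → ℝ)) : Prop :=
  ∃ S : Finset (Fin d → ℝ), (S : Set (Fin d → ℝ)) ⊆ latticePts d ∧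
    Δ = convexHull ℝ (S : Set (Fin d → ℝ))

/-- The dual polytope `Δ* = {m : ⟨m,n⟩ ≥ -1 for all n ∈ Δ}`. -/
def dualPolytope {d : ℕ} (Δ : Set (Fin d → ℝ)) : Set (Fin d → ℝ) :=
  {m | ∀ n ∈ Δ, -1 ≤ pairing m n}

/-- A reflexive polytope: a lattice polytope with `0` in its interior
whose dual polytope is again a lattice polytope. -/
def IsReflexive {d : ℕ} (Δ : Set (Fin d → ℝ)) : Prop :=
  IsLatticePolytope Δ ∧ (0 : Fin d → ℝ) ∈ interior Δ ∧ IsLatticePolytope (dualPolytope Δ)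

/-- `Cone(v₁,…,v_k) = {r₁v₁ + ⋯ + r_kv_k : rᵢ ≥ 0}`. -/
def coneOf {d k : ℕ} (v : Fin k → (Fin d → ℝ)) : Set (Fin d → ℝ) :=
  {x | ∃ r : Fin k → ℝ, (∀ i, 0 ≤ r i) ∧ x = ∑ i, r i • v i}

/-- `r·∂Δ`, the frontier (topological boundary) of the dilate `rΔ`. -/
def bdry {d : ℕ} (r : ℝ) (Δ : Set (Fin d → ℝ)) : Set (Fin d → ℝ) := frontier (r • Δ)

/-- The points of `S` lie in a common proper face of `Δ`: there is `u` with
`⟨u,x⟩ ≤ 1` on `Δ` and `⟨u,v⟩ = 1` for all `v ∈ S`. -/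
def InCommonFace {d : ℕ} (Δ : Set (Fin d → ℝ)) (S : Set (Fin d → ℝ)) : Prop :=
  ∃ u : Fin d → ℝ, (∀ x ∈ Δ, pairing u x ≤ 1) ∧ ∀ v ∈ S, pairing u v = 1

/-- Coordinatewise cast of an integer vector to a real vector. -/
def toRealVec {d : ℕ} (n : Fin d → ℤ) : Fin d → ℝ := fun i => (n i : ℝ)

/-!
Suppose `m ≠ m'`. Then `m' - m` is orthogonal to `v₁, v₂, v₃`, so every point of `Δ` on which
`m` and `m'` both take the value `-1` lies in the span of the `vₜ`. Integrality and the absence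
of a common face put `s = (v₁ + v₂ + v₃) / 2` in `Δ`, where `m = m' = -1`; hence some lattice
vertex `p = Σ rₜ vₜ` of `Δ` with `m p = m' p = -1` has `r_k ≥ 1/2`. For `a ≠ b` the lattice point
`v_a + v_b` of the cone is not in `Δ`, so some `q ∈ Δ*` takes the value `-1` at `v_a` and `v_b`;
comparing such a `q` with `m` at `p` gives `r_i, r_j > 0`. So `p` is a lattice point of
`Cone(v) ∩ Δ` different from `0` and the `vₜ`.
-/

open Finset

lemma pairing_eq_dotProduct {d : ℕ} (m n : Fin d → ℝ) : pairing m n = m ⬝ᵥ n := rfl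

lemma Fin.three_cases {i j k : Fin 3} (hij : i ≠ j) (hik : i ≠ k) (hjk : j ≠ k) (t : Fin 3) :
    t = i ∨ t = j ∨ t = k := by
  revert i j k t; decide

lemma Fin.sum_three_of_ne {M : Type*} [AddCommMonoid M] {i j k : Fin 3} (hij : i ≠ j)
    (hik : i ≠ k) (hjk : j ≠ k) (f : Fin 3 → M) : ∑ t, f t = f i + f j + f k := by
  have huniv : (univ : Finset (Fin 3)) = {i, j, k} := by
    ext t; simpa using Fin.three_cases hij hik hjk t
  rw [huniv, sum_insert (by simp [hij, hik]), sum_pair hjk, add_assoc]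

lemma IsLatticePt.add {d : ℕ} {x y : Fin d → ℝ} (hx : IsLatticePt x) (hy : IsLatticePt y) :
    IsLatticePt (x + y) := fun i ↦ by
  obtain ⟨a, ha⟩ := hx i
  obtain ⟨b, hb⟩ := hy i
  exact ⟨a + b, by simp [ha, hb]⟩

lemma mem_convexHull_filter_of_apply_eq {𝕜 E : Type*} [Field 𝕜] [LinearOrder 𝕜]
    [IsStrictOrderedRing 𝕜] [AddCommGroup E] [Module 𝕜 E] [DecidableEq E] {S : Finset E}
    {x : E} (f : E →ₗ[𝕜] 𝕜) {c : 𝕜} (hS : ∀ y ∈ S, c ≤ f y) (hx : x ∈ convexHull 𝕜 ↑S)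
    (hfx : f x = c) : x ∈ convexHull 𝕜 ↑({y ∈ S | f y = c}) := by
  obtain ⟨w, hw0, hw1, rfl⟩ := Finset.mem_convexHull.1 hx
  have hsum : ∑ y ∈ S, w y * (f y - c) = 0 := by
    rw [centerMass_eq_of_sum_1 _ _ hw1] at hfx
    simp only [mul_sub, sum_sub_distrib, ← sum_mul, hw1, one_mul, sub_eq_zero, ← hfx, map_sum,
      map_smul, smul_eq_mul, id]
  rw [sum_eq_zero_iff_of_nonneg fun y hy ↦ mul_nonneg (hw0 y hy) (sub_nonneg.2 (hS y hy))] at hsum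
  rw [← centerMass_filter_ne_zero]
  refine centerMass_mem_convexHull _ (fun y hy ↦ hw0 y (filter_subset _ _ hy)) ?_ fun y hy ↦ ?_
  · rw [sum_filter_ne_zero, hw1]; exact one_pos
  · rw [mem_filter] at hy
    have := (mul_eq_zero.1 (hsum y hy.1)).resolve_left hy.2
    simpa [hy.1, sub_eq_zero] using this

lemma exists_coords_of_dotProduct_eq_zero {k : ℕ} {v : Fin k → Fin (k + 1) → ℝ}
    (hli : LinearIndependent ℝ v) {n : Fin (k + 1) → ℝ} (hn : n ≠ 0) (hnv : ∀ t, n ⬝ᵥ v t = 0) :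
    ∃ c : Fin k → (Fin (k + 1) → ℝ) →ₗ[ℝ] ℝ, ∀ x, n ⬝ᵥ x = 0 → ∑ t, c t x • v t = x := by
  have hnn : n ⬝ᵥ n ≠ 0 := fun h ↦ hn (dotProduct_self_eq_zero.1 h)
  have hspan : Submodule.span ℝ (Set.range v) ≤ LinearMap.ker (dotProductBilin ℝ ℝ n) :=
    Submodule.span_le.2 (Set.range_subset_iff.2 hnv)
  have hli' := hli.finSnoc fun h ↦ hnn (hspan h)
  obtain ⟨B, hBv⟩ : ∃ B : Module.Basis (Fin (k + 1)) ℝ (Fin (k + 1) → ℝ), ⇑B = Fin.snoc v n :=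
    ⟨_, coe_basisOfLinearIndependentOfCardEqFinrank hli' (by simp)⟩
  refine ⟨fun t ↦ B.coord t.castSucc, fun x hx ↦ ?_⟩
  have hB := B.sum_repr x
  simp only [hBv, Fin.sum_univ_castSucc, Fin.snoc_castSucc, Fin.snoc_last] at hB
  have hlast : B.repr x (Fin.last k) = 0 := by
    have := congrArg (n ⬝ᵥ ·) hB
    simp only [dotProduct_add, dotProduct_sum, dotProduct_smul, hnv, hx, smul_eq_mul, mul_zero,
      sum_const_zero, zero_add] at this
    exact (mul_eq_zero.1 this).resolve_right hnn
  rw [hlast, zero_smul, add_zero] at hB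
  exact hB

section

variable {d : ℕ} {Δ : Set (Fin d → ℝ)}

lemma exists_int_dotProduct_eq_of_mem {q x : Fin d → ℝ}
    (hqL : IsLatticePt q) (hqD : q ∈ dualPolytope Δ) (hxL : IsLatticePt x) (hxΔ : x ∈ Δ) :
    ∃ z : ℤ, -1 ≤ z ∧ q ⬝ᵥ x = z := by
  choose a ha using hqL
  choose b hb using hxL
  have hz : q ⬝ᵥ x = ((∑ i, a i * b i : ℤ) : ℝ) := by simp [dotProduct, ha, hb]
  refine ⟨_, ?_, hz⟩
  have := hqD x hxΔ
  rw [pairing_eq_dotProduct, hz] at this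
  exact_mod_cast this

lemma IsReflexive.exists_latticePt_mem_dualPolytope_dotProduct_lt
    (hΔ : IsReflexive Δ) {x : Fin d → ℝ} (hx : x ∉ Δ) :
    ∃ q, IsLatticePt q ∧ q ∈ dualPolytope Δ ∧ q ⬝ᵥ x < -1 := by
  obtain ⟨⟨S, -, rfl⟩, h0, T, hTL, hT⟩ := hΔ
  obtain ⟨f, u, hfΔ, hfx⟩ := geometric_hahn_banach_closed_point (convex_convexHull ℝ _)
    (S.finite_toSet.isCompact_convexHull (𝕜 := ℝ)).isClosed hx
  have hu : 0 < u := by simpa using hfΔ 0 (interior_subset h0)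
  -- the separating functional, rescaled to take the value `-1` on the separating hyperplane
  set w : Fin d → ℝ := fun i ↦ -u⁻¹ * f fun j ↦ if i = j then 1 else 0
  have hw : ∀ y, w ⬝ᵥ y = -u⁻¹ * f y := fun y ↦ by
    have hf := LinearMap.pi_apply_eq_sum_univ f.toLinearMap y
    simp only [ContinuousLinearMap.coe_coe] at hf
    rw [hf, dotProduct, mul_sum]
    refine sum_congr rfl fun i _ ↦ ?_
    simp only [w, smul_eq_mul]; ring
  have hwD : w ∈ dualPolytope (convexHull ℝ ↑S) := fun y hy ↦ by
    rw [pairing_eq_dotProduct, hw, neg_mul, neg_le_neg_iff, inv_mul_le_one₀ hu]; exact (hfΔ y hy).le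
  have hwx : w ⬝ᵥ x < -1 := by
    rw [hw, neg_mul, neg_lt_neg_iff, one_lt_inv_mul₀ hu]; exact hfx
  rw [hT] at hwD
  obtain ⟨q, hqT, hqw⟩ := ((dotProductBilin ℝ ℝ).flip x).concaveOn
    (convex_convexHull ℝ _) |>.exists_le_of_mem_convexHull (subset_convexHull ℝ _) hwD
  exact ⟨q, hTL hqT, hT ▸ subset_convexHull ℝ _ hqT, hqw.trans_lt hwx⟩

lemma inCommonFace_of_mem_dualPolytope {S : Set (Fin d → ℝ)} {q : Fin d → ℝ}
    (hq : q ∈ dualPolytope Δ) (hqS : ∀ x ∈ S, q ⬝ᵥ x = -1) : InCommonFace Δ S := by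
  refine ⟨-q, fun x hx ↦ ?_, fun x hx ↦ ?_⟩
  · have := hq x hx
    rw [pairing_eq_dotProduct] at this ⊢
    rw [neg_dotProduct]; linarith
  · rw [pairing_eq_dotProduct, neg_dotProduct, hqS x hx, neg_neg]

lemma IsLatticePolytope.exists_latticePt_mem_face_apply_ge (hΔ : IsLatticePolytope Δ)
    {m m' s : Fin d → ℝ} (hm : m ∈ dualPolytope Δ) (hm' : m' ∈ dualPolytope Δ) (hs : s ∈ Δ)
    (hms : m ⬝ᵥ s = -1) (hm's : m' ⬝ᵥ s = -1) (g : (Fin d → ℝ) →ₗ[ℝ] ℝ) :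
    ∃ p ∈ Δ, IsLatticePt p ∧ m ⬝ᵥ p = -1 ∧ m' ⬝ᵥ p = -1 ∧ g s ≤ g p := by
  classical
  obtain ⟨S, hSL, rfl⟩ := hΔ
  have hSΔ : ∀ y ∈ S, y ∈ convexHull ℝ ↑S := fun y hy ↦ subset_convexHull ℝ _ hy
  have h₁ := mem_convexHull_filter_of_apply_eq (dotProductBilin ℝ ℝ m)
    (fun y hy ↦ hm y (hSΔ y hy)) hs hms
  have h₂ := mem_convexHull_filter_of_apply_eq (dotProductBilin ℝ ℝ m')
    (fun y hy ↦ hm' y (hSΔ y (mem_filter.1 hy).1)) h₁ hm's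
  obtain ⟨p, hp, hgp⟩ := (g.convexOn (convex_convexHull ℝ _)).exists_ge_of_mem_convexHull
    (subset_convexHull ℝ _) h₂
  simp only [mem_coe, mem_filter, dotProductBilin_apply_apply] at hp
  exact ⟨p, hSΔ p hp.1.1, hSL hp.1.1, hp.1.2, hp.2, hgp⟩

lemma half_sum_mem {v : Fin 3 → Fin d → ℝ} (hΔ : IsReflexive Δ) (hvΔ : ∀ t, v t ∈ Δ)
    (hvL : ∀ t, IsLatticePt (v t)) (hface : ¬ InCommonFace Δ (Set.range v)) :
    (2⁻¹ : ℝ) • ∑ t, v t ∈ Δ := by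
  by_contra hs
  obtain ⟨q, hqL, hqD, hq⟩ := hΔ.exists_latticePt_mem_dualPolytope_dotProduct_lt hs
  choose z hz1 hz using fun t ↦ exists_int_dotProduct_eq_of_mem hqL hqD (hvL t) (hvΔ t)
  rw [dotProduct_smul, dotProduct_sum, Fin.sum_univ_three, hz, hz, hz, smul_eq_mul] at hq
  have hsum : z 0 + z 1 + z 2 < -2 := by
    have : ((z 0 + z 1 + z 2 : ℤ) : ℝ) < -2 := by push_cast; linarith
    exact_mod_cast this
  refine hface (inCommonFace_of_mem_dualPolytope hqD ?_)
  rintro _ ⟨t, rfl⟩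
  have hz' : z t = -1 := by
    have := hz1 0; have := hz1 1; have := hz1 2
    fin_cases t <;> simp <;> omega
  rw [hz, hz']
  norm_num

lemma coeff_pos_of_mem {v : Fin 3 → Fin d → ℝ} {i j k : Fin 3}
    (hij : i ≠ j) (hik : i ≠ k) (hjk : j ≠ k) (hvj : v j ∈ Δ) {m q : Fin d → ℝ}
    (hmi : m ⬝ᵥ v i = -1) (hmj : m ⬝ᵥ v j = -1) (hmk : m ⬝ᵥ v k = 0)
    (hqD : q ∈ dualPolytope Δ) (hqi : q ⬝ᵥ v i = -1) (hqk : q ⬝ᵥ v k = -1)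
    {r : Fin 3 → ℝ} (hrΔ : ∑ t, r t • v t ∈ Δ) (hrm : m ⬝ᵥ ∑ t, r t • v t = -1)
    (hrk : 0 < r k) : 0 < r j := by
  have hx := hqD _ hrΔ
  have hj := hqD _ hvj
  rw [pairing_eq_dotProduct] at hx hj
  have hexp : (q - m) ⬝ᵥ ∑ t, r t • v t = r j * (q ⬝ᵥ v j + 1) - r k := by
    simp only [Fin.sum_three_of_ne hij hik hjk, sub_dotProduct, dotProduct_add, dotProduct_smul,
      hqi, hqk, hmi, hmj, hmk, smul_eq_mul]
    ring
  rw [sub_dotProduct, hrm] at hexp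
  exact pos_of_mul_pos_left (b := q ⬝ᵥ v j + 1) (by linarith) (by linarith)

section Cone

variable {k : ℕ} {v : Fin k → Fin d → ℝ}

lemma eq_of_coeff_pos_of_mem_cone (hli : LinearIndependent ℝ v)
    (hcone : coneOf v ∩ Δ ∩ latticePts d = insert (0 : Fin d → ℝ) (Set.range v))
    {r : Fin k → ℝ} (hr : ∀ t, 0 ≤ r t) (hrΔ : ∑ t, r t • v t ∈ Δ)
    (hrL : IsLatticePt (∑ t, r t • v t)) {a b : Fin k} (ha : 0 < r a) (hb : 0 < r b) :
    a = b := by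
  have hmem : ∑ t, r t • v t ∈ coneOf v ∩ Δ ∩ latticePts d := ⟨⟨⟨r, hr, rfl⟩, hrΔ⟩, hrL⟩
  rw [hcone] at hmem
  obtain h0 | ⟨t, ht⟩ := hmem
  · have := hli.eq_coords_of_eq (g := 0) (by simpa using h0) a
    exact absurd this ha.ne'
  · have hcoord := hli.eq_coords_of_eq (f := r) (g := Pi.single t 1) (by simp [ht])
    have hat : a = t := by_contra fun h ↦ ha.ne' (by simpa [h] using hcoord a)
    have hbt : b = t := by_contra fun h ↦ hb.ne' (by simpa [h] using hcoord b)
    rw [hat, hbt]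

lemma add_notMem_of_ne (hli : LinearIndependent ℝ v)
    (hcone : coneOf v ∩ Δ ∩ latticePts d = insert (0 : Fin d → ℝ) (Set.range v))
    (hvL : ∀ t, IsLatticePt (v t)) {a b : Fin k} (hab : a ≠ b) : v a + v b ∉ Δ := by
  intro hΔ
  have hsum : ∑ t, (Pi.single a 1 + Pi.single b 1 : Fin k → ℝ) t • v t = v a + v b := by
    simp [add_smul, sum_add_distrib]
  refine hab (eq_of_coeff_pos_of_mem_cone hli hcone (fun t ↦ ?_) (hsum ▸ hΔ)
    (hsum ▸ (hvL a).add (hvL b)) (a := a) (b := b) ?_ ?_)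
  · simp only [Pi.add_apply, Pi.single_apply]; positivity
  · simp [Ne.symm hab]
  · simp [hab]

lemma exists_mem_dualPolytope_dotProduct_eq_neg_one (hΔ : IsReflexive Δ) (hvΔ : ∀ t, v t ∈ Δ)
    (hvL : ∀ t, IsLatticePt (v t)) (hli : LinearIndependent ℝ v)
    (hcone : coneOf v ∩ Δ ∩ latticePts d = insert (0 : Fin d → ℝ) (Set.range v))
    {a b : Fin k} (hab : a ≠ b) :
    ∃ q ∈ dualPolytope Δ, q ⬝ᵥ v a = -1 ∧ q ⬝ᵥ v b = -1 := by
  obtain ⟨q, hqL, hqD, hq⟩ :=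
    hΔ.exists_latticePt_mem_dualPolytope_dotProduct_lt (add_notMem_of_ne hli hcone hvL hab)
  obtain ⟨za, hza, ha⟩ := exists_int_dotProduct_eq_of_mem hqL hqD (hvL a) (hvΔ a)
  obtain ⟨zb, hzb, hb⟩ := exists_int_dotProduct_eq_of_mem hqL hqD (hvL b) (hvΔ b)
  rw [dotProduct_add, ha, hb] at hq
  have hz : za = -1 ∧ zb = -1 := by
    have : za + zb < -1 := by exact_mod_cast hq
    omega
  exact ⟨q, hqD, by simp [ha, hz.1], by simp [hb, hz.2]⟩

end Cone

end

/-- In the setting of Statement 9, for fixed distinct indices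
`i, j, k` there is at most one lattice point `m ∈ Δ*` with
`⟨m,vᵢ⟩ = ⟨m,vⱼ⟩ = -1` and `⟨m,v_k⟩ = 0`. -/
theorem uniqueness_of_dual_lattice_point_for_three_cone
    (Δ : Set (Fin 4 → ℝ)) (hΔ : IsReflexive Δ)
    (v : Fin 3 → (Fin 4 → ℝ))
    (hvΔ : ∀ i, v i ∈ Δ) (hvL : ∀ i, IsLatticePt (v i))
    (hli : LinearIndependent ℝ v)
    (hcone : coneOf v ∩ Δ ∩ latticePts 4 = insert (0 : Fin 4 → ℝ) (Set.range v))
    (hface : ¬ InCommonFace Δ (Set.range v))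
    (i j k : Fin 3) (hij : i ≠ j) (hik : i ≠ k) (hjk : j ≠ k) :
    ∀ m m' : Fin 4 → ℝ,
      IsLatticePt m → m ∈ dualPolytope Δ →
      pairing m (v i) = -1 → pairing m (v j) = -1 → pairing m (v k) = 0 →
      IsLatticePt m' → m' ∈ dualPolytope Δ →
      pairing m' (v i) = -1 → pairing m' (v j) = -1 → pairing m' (v k) = 0 →
      m = m' := by
  intro m m' _ hmD hmi hmj hmk _ hmD' hmi' hmj' hmk'
  simp only [pairing_eq_dotProduct] at hmi hmj hmk hmi' hmj' hmk'
  by_contra hne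
  have hcases := Fin.three_cases hij hik hjk
  have horth : ∀ t, (m' - m) ⬝ᵥ v t = 0 := fun t ↦ by
    rcases hcases t with rfl | rfl | rfl <;> simp [sub_dotProduct, *]
  obtain ⟨c, hc⟩ := exists_coords_of_dotProduct_eq_zero hli (sub_ne_zero.2 (Ne.symm hne)) horth
  set s : Fin 4 → ℝ := (2⁻¹ : ℝ) • ∑ t, v t
  have hs : ∀ μ, μ ⬝ᵥ v i = -1 → μ ⬝ᵥ v j = -1 → μ ⬝ᵥ v k = 0 → μ ⬝ᵥ s = -1 := by
    intro μ hi hj hk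
    simp only [s, dotProduct_smul, Fin.sum_three_of_ne hij hik hjk, dotProduct_add, hi, hj, hk]
    norm_num
  have hcs : c k s = 2⁻¹ := hli.eq_coords_of_eq ((hc s (by simp [s, dotProduct_sum, horth])).trans
    (smul_sum ..)) k
  obtain ⟨p, hpΔ, hpL, hmp, hm'p, hcp⟩ := hΔ.1.exists_latticePt_mem_face_apply_ge hmD hmD'
    (half_sum_mem hΔ hvΔ hvL hface) (hs m hmi hmj hmk) (hs m' hmi' hmj' hmk') (c k)
  have hp := hc p (by rw [sub_dotProduct, hmp, hm'p, sub_self])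
  rw [← hp] at hpΔ hpL hmp
  obtain ⟨q₁, hq₁D, hq₁i, hq₁k⟩ :=
    exists_mem_dualPolytope_dotProduct_eq_neg_one hΔ hvΔ hvL hli hcone hik
  obtain ⟨q₂, hq₂D, hq₂j, hq₂k⟩ :=
    exists_mem_dualPolytope_dotProduct_eq_neg_one hΔ hvΔ hvL hli hcone hjk
  have hk : 0 < c k p := (by norm_num [hcs] : (0 : ℝ) < c k s).trans_le hcp
  have hj := coeff_pos_of_mem hij hik hjk (hvΔ j) hmi hmj hmk hq₁D hq₁i hq₁k hpΔ hmp hk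
  have hi := coeff_pos_of_mem hij.symm hjk hik (hvΔ i) hmj hmi hmk hq₂D hq₂j hq₂k hpΔ hmp hk
  have hr : ∀ t, 0 ≤ c t p := fun t ↦ by rcases hcases t with rfl | rfl | rfl <;> positivity
  exact hij (eq_of_coeff_pos_of_mem_cone hli hcone hr hpΔ hpL hi hj)
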